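/- Let p = (p₁,…,pₘ) : ℝ^d → ℝ^m be a polynomial map with p(0) = 0, and let X : [0,T] → ℝ^d be a path with X₀ = 0 and p(X_t) = 0 for all t ∈ [0,T]. Let I be the smallest subspace of T^{≥1}(ℝ^d) containing φ(p₁),…,φ(pₘ) and satisfying x≻y ∈ I and y≻x ∈ I for all x ∈ I, y ∈ T^{≥1}(ℝ^d) (the ≻-ideal generated by the φ(pᵢ)). Then ⟨σ(X), x⟩ = 0 for every x ∈ I, i.e. X ∈ 𝒱(I). -/

import Mathlib

open scoped BigOperators TensorProduct

namespace PathVarieties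

/-- Words over an alphabet `α`; the letters `{1,…,d}` of `ℝ^d` correspond to `α = Fin d`. -/
abbrev Word (α : Type*) := List α

/-- The tensor algebra `T(ℝ^d)`, identified with the free real vector space on words. -/
abbrev TA (α : Type*) := Word α →₀ ℝ

/-- The list of all (riffle) shuffles of two words. -/
def shuffles {α : Type*} : Word α → Word α → List (Word α)
  | [], v => [v]
  | a :: u, [] => [a :: u]
  | a :: u, b :: v =>
      ((shuffles u (b :: v)).map (a :: ·)) ++ ((shuffles (a :: u) v).map (b :: ·))
termination_by u v => u.length + v.length
decreasing_by all_goals (simp only [List.length_cons]; omega)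

/-- Shuffle product of two words, as an element of `T(ℝ^d)`. -/
noncomputable def shw {α : Type*} (u v : Word α) : TA α :=
  ((shuffles u v).map fun w => Finsupp.single w (1 : ℝ)).sum

/-- The shuffle product `⧢` on `T(ℝ^d)`, the bilinear extension of the shuffle of words. -/
noncomputable def sh {α : Type*} (x y : TA α) : TA α :=
  x.sum fun u cu => y.sum fun v cv => (cu * cv) • shw u v

/-- Right halfshuffle `u ≻ v` of words (`v` nonempty): shuffle `u` with `v` minus its
last letter, then append the last letter of `v`.  (This is the unique bilinear operation
with `w ≻ a = wa` and `w ≻ (va) = (w≻v + v≻w)a`.) -/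
noncomputable def rshw {α : Type*} (u v : Word α) : TA α :=
  ((shuffles u v.dropLast).map fun w =>
    Finsupp.single (w ++ v.drop (v.length - 1)) (1 : ℝ)).sum

/-- Right halfshuffle `≻` on `T^{≥1}(ℝ^d)`, extended bilinearly. -/
noncomputable def rsh {α : Type*} (x y : TA α) : TA α :=
  x.sum fun u cu => y.sum fun v cv => (cu * cv) • rshw u v

/-- Left halfshuffle `u ≺ v` of words (`u` nonempty): the first letter of `u` followed by
the shuffle of the rest of `u` with `v`.  (This is the unique bilinear operation with
`a ≺ w = aw` and `(av) ≺ w = a(w≺v + v≺w)`.) -/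
noncomputable def lshw {α : Type*} (u v : Word α) : TA α :=
  ((shuffles u.tail v).map fun w => Finsupp.single (u.take 1 ++ w) (1 : ℝ)).sum

/-- Left halfshuffle `≺` on `T^{≥1}(ℝ^d)`, extended bilinearly. -/
noncomputable def lsh {α : Type*} (x y : TA α) : TA α :=
  x.sum fun u cu => y.sum fun v cv => (cu * cv) • lshw u v

/-- The antipode `𝒜`, with `𝒜(i₁⋯iₙ) = (−1)ⁿ iₙ⋯i₁`. -/
noncomputable def antipode {α : Type*} (x : TA α) : TA α :=
  x.sum fun w c => Finsupp.single w.reverse (((-1 : ℝ) ^ w.length) * c)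

/-- Helper for `Λ_B`: value on a reversed word. -/
noncomputable def lamRev {α β : Type*} (B : α → TA β) : Word α → TA β
  | [] => Finsupp.single [] 1
  | [i] => B i
  | i :: w => rsh (lamRev B w) (B i)

/-- `Λ_B` on a word: `Λ_B e = e`, `Λ_B i = B i`, `Λ_B (w·i) = (Λ_B w) ≻ (Λ_B i)`. -/
noncomputable def lamW {α β : Type*} (B : α → TA β) (w : Word α) : TA β :=
  lamRev B w.reverse

/-- The linear map `Λ_B : T(ℝ^t) → T(ℝ^d)` induced by `B` on letters. -/
noncomputable def Lam {α β : Type*} (B : α → TA β) (x : TA α) : TA β :=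
  x.sum fun w c => c • lamW B w

/-- `splitEmb e j n w = Σ_{w = u₁⋯uₙ} e_j(u₁) ⧢ e_{j+1}(u₂) ⧢ ⋯ ⧢ e_{j+n−1}(uₙ)`,
the sum over all splittings of `w` into `n` consecutive (possibly empty) factors,
each factor relabelled letterwise by `e`. -/
noncomputable def splitEmb {α β : Type*} (e : ℕ → α → β) : ℕ → ℕ → Word α → TA β
  | _, 0, w => if w.isEmpty then Finsupp.single ([] : Word β) (1 : ℝ) else 0
  | j, k + 1, w => ∑ m ∈ Finset.range (w.length + 1),
      sh (Finsupp.single ((w.take m).map (e j)) (1 : ℝ)) (splitEmb e (j + 1) k (w.drop m))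

/-- `Σ_{x=uv} f(u)·v`: deconcatenate, evaluate the functional `f` on prefixes. -/
noncomputable def leftAct {α : Type*} (f : Word α → ℝ) (x : TA α) : TA α :=
  x.sum fun w c => c • ∑ k ∈ Finset.range (w.length + 1),
    f (w.take k) • Finsupp.single (w.drop k) (1 : ℝ)

/-- `Σ_{x=uv} u·f(v)`: deconcatenate, evaluate the functional `f` on suffixes. -/
noncomputable def rightAct {α : Type*} (f : Word α → ℝ) (x : TA α) : TA α :=
  x.sum fun w c => c • ∑ k ∈ Finset.range (w.length + 1),
    f (w.drop k) • Finsupp.single (w.take k) (1 : ℝ)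

/-- A raw path: a time horizon `T` together with a map `ℝ → ℝ^α`
(only the restriction to `[0,T]` is relevant). -/
structure RawPath (α : Type*) where
  T : ℝ
  toFun : ℝ → α → ℝ

/-- A path: positive time horizon, continuous on `[0,T]` and piecewise continuously
differentiable there (witnessed by a partition `0 = τ₀ < τ₁ < ⋯ < τₙ = T`). -/
def IsPath {α : Type*} (X : RawPath α) : Prop :=
  0 < X.T ∧ (∀ i, ContinuousOn (fun t => X.toFun t i) (Set.Icc 0 X.T)) ∧
    ∃ (n : ℕ) (τ : Fin (n + 1) → ℝ), StrictMono τ ∧ τ 0 = 0 ∧ τ (Fin.last n) = X.T ∧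
      ∀ (k : Fin n) (i : α), ContDiffOn ℝ 1 (fun t => X.toFun t i)
        (Set.Icc (τ k.castSucc) (τ k.succ))

/-- Iterated integrals, by recursion on the reversed word:
`sigRev X (i :: w) t = ∫₀ᵗ ⟨σ(X)ₛ, w.reverse⟩ dX⁽ⁱ⁾(s)`. -/
noncomputable def sigRev {α : Type*} (X : ℝ → α → ℝ) : Word α → ℝ → ℝ
  | [], _ => 1
  | i :: w, t => ∫ s in (0 : ℝ)..t, sigRev X w s * deriv (fun u => X u i) s

/-- `⟨σ(X)_t, w⟩`, the iterated-integrals signature of `X` stopped at time `t`. -/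
noncomputable def sigUpTo {α : Type*} (X : RawPath α) (t : ℝ) (w : Word α) : ℝ :=
  sigRev X.toFun w.reverse t

/-- `⟨σ(X), w⟩`, the iterated-integrals signature of the path `X` at a word `w`. -/
noncomputable def sig {α : Type*} (X : RawPath α) (w : Word α) : ℝ :=
  sigUpTo X X.T w

/-- Pairing of a word-indexed functional with an element of `T(ℝ^d)`. -/
noncomputable def pairF {α : Type*} (f : Word α → ℝ) (x : TA α) : ℝ :=
  x.sum fun w c => c * f w

/-- `⟨σ(X), x⟩` for a tensor `x ∈ T(ℝ^d)` (linear in `x`). -/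
noncomputable def pair {α : Type*} (X : RawPath α) (x : TA α) : ℝ :=
  Finsupp.linearCombination ℝ (sig X) x

/-- The path variety `𝒱(W)` of all paths whose signature kills every element of `W`. -/
def V {α : Type*} (W : Set (TA α)) : Set (RawPath α) :=
  {X | IsPath X ∧ ∀ x ∈ W, pair X x = 0}

/-- `ℐ(M)`, the space of tensors killed by the signature of every path in `M`. -/
noncomputable def Idl {α : Type*} (M : Set (RawPath α)) : Submodule ℝ (TA α) :=
  ⨅ X ∈ M, LinearMap.ker (Finsupp.linearCombination ℝ (sig X))

/-- Concatenation `X ⊔ Y` of paths. -/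
noncomputable def concat {α : Type*} (X Y : RawPath α) : RawPath α where
  T := X.T + Y.T
  toFun := fun t i =>
    if t ≤ X.T then X.toFun t i else Y.toFun (t - X.T) i + X.toFun X.T i - Y.toFun 0 i

/-- Time reversal `⟵X`. -/
def timeRev {α : Type*} (X : RawPath α) : RawPath α :=
  ⟨X.T, fun t i => X.toFun (X.T - t) i⟩

/-- `concatIter X n = X^{⊔(n+1)}`. -/
noncomputable def concatIter {α : Type*} (X : RawPath α) : ℕ → RawPath α
  | 0 => X
  | n + 1 => concat (concatIter X n) X

/-- `X^{⊔n}`, the `n`-fold concatenation of `X` with itself (intended for `n ≥ 1`). -/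
noncomputable def concatPow {α : Type*} (X : RawPath α) (n : ℕ) : RawPath α :=
  concatIter X (n - 1)

/-- `concatFold f k = f 0 ⊔ f 1 ⊔ ⋯ ⊔ f k`. -/
noncomputable def concatFold {α : Type*} (f : ℕ → RawPath α) : ℕ → RawPath α
  | 0 => f 0
  | k + 1 => concat (concatFold f k) (f (k + 1))

/-- The deconcatenation coproduct `Δ : T(ℝ^d) → T(ℝ^d) ⊗ T(ℝ^d)`,
`Δw = Σ_{w=uv} u ⊗ v`. -/
noncomputable def deconc {α : Type*} (x : TA α) : TensorProduct ℝ (TA α) (TA α) :=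
  x.sum fun w c => c • ∑ k ∈ Finset.range (w.length + 1),
    (Finsupp.single (w.take k) (1 : ℝ)) ⊗ₜ[ℝ] (Finsupp.single (w.drop k) (1 : ℝ))

end PathVarieties

/-! For every `t`, the functional `⟨σ(X)_t, ·⟩` is a shuffle character: both sides of
`⟨σ(X)_t, u ⧢ v⟩ = ⟨σ(X)_t, u⟩⟨σ(X)_t, v⟩` vanish at `t = 0` and have the same right
derivative on each `C¹` piece of `X`. Together with `⟨σ(X)_t, i⟩ = X_t^i` (as `X₀ = 0`) this gives
`⟨σ(X)_t, φ(q)⟩ = q(X_t)`, so every `φ(pⱼ)` pairs to zero with `σ(X)_t` for all `t`. The right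
derivative of `t ↦ ⟨σ(X)_t, z ≻ y⟩` is `⟨σ(X)_t, z⟩` times that of `t ↦ ⟨σ(X)_t, y⟩`; hence
the tensors pairing to zero with `σ(X)_t` for all `t ∈ [0,T]` form a `≻`-ideal, which then
contains `I`. Take `t = T`. -/

open Set Filter Topology MeasureTheory

theorem exists_mem_Ico_of_monotone {n : ℕ} {τ : Fin (n + 1) → ℝ} (hτ : Monotone τ) {x : ℝ}
    (h0 : τ 0 ≤ x) (hx : x < τ (Fin.last n)) :
    ∃ k : Fin n, x ∈ Ico (τ k.castSucc) (τ k.succ) := by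
  induction n with
  | zero => exact absurd (h0.trans_lt hx) (lt_irrefl _)
  | succ n ih =>
    by_cases hlt : x < τ (Fin.last n).castSucc
    · obtain ⟨k, hk⟩ := ih (τ := τ ∘ Fin.castSucc) (hτ.comp Fin.strictMono_castSucc.monotone) h0 hlt
      exact ⟨k.castSucc, hk⟩
    · exact ⟨Fin.last n, not_lt.1 hlt, hx⟩

theorem IntervalIntegrable.trans_iterate_fin {f : ℝ → ℝ} {μ : Measure ℝ} {n : ℕ}
    {τ : Fin (n + 1) → ℝ} (h : ∀ k : Fin n, IntervalIntegrable f μ (τ k.castSucc) (τ k.succ)) :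
    IntervalIntegrable f μ (τ 0) (τ (Fin.last n)) := by
  induction n with
  | zero => exact IntervalIntegrable.refl
  | succ n ih =>
    exact (ih (τ := τ ∘ Fin.castSucc) fun k => h k.castSucc).trans (h (Fin.last n))

section ContDiffOnIcc

variable {f : ℝ → ℝ} {a b x : ℝ}

theorem ContDiffOn.intervalIntegrable_deriv (hab : a < b) (hf : ContDiffOn ℝ 1 f (Icc a b)) :
    IntervalIntegrable (deriv f) volume a b := by
  have hcont : IntervalIntegrable (derivWithin f (Icc a b)) volume a b :=
    (hf.continuousOn_derivWithin (uniqueDiffOn_Icc hab) le_rfl).intervalIntegrable_of_Icc hab.le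
  refine hcont.congr_ae ?_
  rw [uIoc_of_le hab.le, ← Measure.restrict_congr_set Ioo_ae_eq_Ioc]
  filter_upwards [ae_restrict_mem measurableSet_Ioo] with s hs
  exact derivWithin_of_mem_nhds (Icc_mem_nhds hs.1 hs.2)

theorem ContDiffOn.hasDerivWithinAt_Ici (hf : ContDiffOn ℝ 1 f (Icc a b)) (hx : x ∈ Ico a b) :
    HasDerivWithinAt f (derivWithin f (Icc a b) x) (Ici x) x :=
  ((hf.differentiableOn one_ne_zero) x (Ico_subset_Icc_self hx)).hasDerivWithinAt
    |>.mono_of_mem_nhdsWithin <| mem_of_superset (Icc_mem_nhdsGE_of_mem ⟨le_rfl, hx.2⟩)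
      (Icc_subset_Icc_left hx.1)

theorem ContDiffOn.tendsto_deriv_nhdsGT (hab : a < b) (hf : ContDiffOn ℝ 1 f (Icc a b))
    (hx : x ∈ Ico a b) : Tendsto (deriv f) (𝓝[>] x) (𝓝 (derivWithin f (Icc a b) x)) := by
  have hcont := hf.continuousOn_derivWithin (uniqueDiffOn_Icc hab) le_rfl x
    (Ico_subset_Icc_self hx)
  refine (hcont.mono_of_mem_nhdsWithin ?_).tendsto.congr' ?_
  · exact mem_of_superset (Ioo_mem_nhdsGT hx.2) fun s hs => ⟨hx.1.trans hs.1.le, hs.2.le⟩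
  · filter_upwards [Ioo_mem_nhdsGT hx.2] with s hs
    exact derivWithin_of_mem_nhds (Icc_mem_nhds (hx.1.trans_lt hs.1) hs.2)

end ContDiffOnIcc

theorem derivWithin_Ici_eq_zero_of_eqOn_zero {f : ℝ → ℝ} {x T : ℝ} (hf : EqOn f 0 (Icc 0 T))
    (hx : x ∈ Ico 0 T) : derivWithin f (Ici x) x = 0 := by
  have hev : f =ᶠ[𝓝[Ici x] x] fun _ => 0 := by
    filter_upwards [Icc_mem_nhdsGE_of_mem ⟨le_rfl, hx.2⟩] with s hs
    exact hf ⟨hx.1.trans hs.1, hs.2⟩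
  rw [hev.derivWithin_eq (hf (Ico_subset_Icc_self hx)), derivWithin_fun_const,
    Pi.zero_apply]

theorem HasDerivWithinAt.list_sum {ι : Type*} {A : ι → ℝ → ℝ} {A' : ι → ℝ} {s : Set ℝ} {x : ℝ}
    (l : List ι) (h : ∀ i ∈ l, HasDerivWithinAt (A i) (A' i) s x) :
    HasDerivWithinAt (fun t => (l.map fun i => A i t).sum) (l.map A').sum s x := by
  induction l with
  | nil => simpa using hasDerivWithinAt_const x s (0 : ℝ)
  | cons i l ih =>
    simp only [List.map_cons, List.sum_cons]
    exact (h i List.mem_cons_self).add (ih fun j hj => h j (List.mem_cons_of_mem i hj))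

namespace PathVarieties

variable {α : Type*} {X : RawPath α} {x t : ℝ}

@[simp] theorem shuffles_nil_left (v : Word α) : shuffles [] v = [v] := by
  cases v <;> simp [shuffles]

@[simp] theorem shuffles_nil_right (u : Word α) : shuffles u [] = [u] := by
  cases u <;> simp [shuffles]

theorem shuffles_cons_cons (a b : α) (u v : Word α) :
    shuffles (a :: u) (b :: v) =
      (shuffles u (b :: v)).map (a :: ·) ++ (shuffles (a :: u) v).map (b :: ·) := by
  rw [shuffles]

theorem perm_shuffles_append_singleton :
    ∀ (p q : Word α) (a b : α), (shuffles (p ++ [a]) (q ++ [b])).Perm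
      ((shuffles p (q ++ [b])).map (· ++ [a]) ++ (shuffles (p ++ [a]) q).map (· ++ [b]))
  | [], [], a, b => by simpa [shuffles_cons_cons] using List.Perm.swap [b, a] [a, b] []
  | [], c :: q, a, b => by
    have ih := (perm_shuffles_append_singleton [] q a b).map (c :: ·)
    simp only [List.nil_append, List.cons_append, shuffles_cons_cons] at ih ⊢
    classical
    refine (ih.append_left _).trans (List.perm_iff_count.2 fun w => ?_)
    simp [List.count_cons, Function.comp_def]
    omega
  | e :: p, [], a, b => by
    have ih := (perm_shuffles_append_singleton p [] a b).map (e :: ·)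
    simp only [List.nil_append, List.cons_append, shuffles_cons_cons] at ih ⊢
    classical
    refine (ih.append_right _).trans (List.perm_iff_count.2 fun w => ?_)
    simp [List.count_append, List.count_cons, Function.comp_def]
    omega
  | e :: p, c :: q, a, b => by
    have ih₁ := (perm_shuffles_append_singleton p (c :: q) a b).map (e :: ·)
    have ih₂ := (perm_shuffles_append_singleton (e :: p) q a b).map (c :: ·)
    simp only [List.cons_append, shuffles_cons_cons] at ih₁ ih₂ ⊢
    classical
    refine (ih₁.append ih₂).trans (List.perm_iff_count.2 fun w => ?_)
    simp [List.count_append, Function.comp_def]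
    omega
termination_by p q => p.length + q.length

theorem sigUpTo_nil (X : RawPath α) (t : ℝ) : sigUpTo X t [] = 1 := rfl

theorem sigUpTo_append_singleton (X : RawPath α) (t : ℝ) (w : Word α) (i : α) :
    sigUpTo X t (w ++ [i]) = ∫ s in 0..t, sigUpTo X s w * deriv (fun u => X.toFun u i) s := by
  simp only [sigUpTo, List.reverse_append, List.reverse_singleton, List.singleton_append]
  rfl

theorem sigUpTo_zero_append_singleton (X : RawPath α) (w : Word α) (i : α) :
    sigUpTo X 0 (w ++ [i]) = 0 := by
  simp [sigUpTo_append_singleton]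

theorem sigUpTo_zero_of_ne_nil (X : RawPath α) {w : Word α} (hw : w ≠ []) : sigUpTo X 0 w = 0 := by
  obtain ⟨q, b, rfl⟩ := (List.eq_nil_or_concat w).resolve_left hw
  simpa using sigUpTo_zero_append_singleton X q b

noncomputable def rightDeriv (X : RawPath α) (i : α) (x : ℝ) : ℝ :=
  derivWithin (fun t => X.toFun t i) (Ici x) x

namespace IsPath

theorem exists_piece (hX : IsPath X) (hx : x ∈ Ico 0 X.T) :
    ∃ a b, a < b ∧ x ∈ Ico a b ∧ ∀ i, ContDiffOn ℝ 1 (fun t => X.toFun t i) (Icc a b) := by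
  obtain ⟨-, -, n, τ, hτ, hτ0, hτT, hC1⟩ := hX
  obtain ⟨k, hk⟩ := exists_mem_Ico_of_monotone hτ.monotone (hτ0 ▸ hx.1) (hτT ▸ hx.2)
  exact ⟨_, _, hτ Fin.castSucc_lt_succ, hk, hC1 k⟩

theorem hasDerivWithinAt_rightDeriv (hX : IsPath X) (i : α) (hx : x ∈ Ico 0 X.T) :
    HasDerivWithinAt (fun t => X.toFun t i) (rightDeriv X i x) (Ici x) x := by
  obtain ⟨a, b, -, hxab, hC1⟩ := hX.exists_piece hx
  exact (ContDiffOn.hasDerivWithinAt_Ici (hC1 i) hxab).differentiableWithinAt.hasDerivWithinAt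

theorem tendsto_deriv_rightDeriv (hX : IsPath X) (i : α) (hx : x ∈ Ico 0 X.T) :
    Tendsto (deriv fun t => X.toFun t i) (𝓝[>] x) (𝓝 (rightDeriv X i x)) := by
  obtain ⟨a, b, hab, hxab, hC1⟩ := hX.exists_piece hx
  rw [rightDeriv, (ContDiffOn.hasDerivWithinAt_Ici (hC1 i) hxab).derivWithin
    (uniqueDiffWithinAt_Ici x)]
  exact ContDiffOn.tendsto_deriv_nhdsGT hab (hC1 i) hxab

theorem intervalIntegrable_deriv (hX : IsPath X) (i : α) :
    IntervalIntegrable (deriv fun t => X.toFun t i) volume 0 X.T := by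
  obtain ⟨-, -, n, τ, hτ, hτ0, hτT, hC1⟩ := hX
  rw [← hτ0, ← hτT]
  exact IntervalIntegrable.trans_iterate_fin fun k =>
    ContDiffOn.intervalIntegrable_deriv (hτ Fin.castSucc_lt_succ) (hC1 k i)

theorem intervalIntegrable_mul_deriv (hX : IsPath X) {f : ℝ → ℝ} (hf : ContinuousOn f (Icc 0 X.T))
    (i : α) (ht : t ∈ Icc 0 X.T) :
    IntervalIntegrable (fun s => f s * deriv (fun u => X.toFun u i) s) volume 0 t := by
  have hsub : uIcc 0 t ⊆ Icc 0 X.T := by rw [uIcc_of_le ht.1]; exact Icc_subset_Icc_right ht.2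
  exact ((hX.intervalIntegrable_deriv i).mono_set (by rwa [uIcc_of_le hX.1.le])).continuousOn_mul
    (hf.mono hsub)

theorem continuousOn_sigUpTo (hX : IsPath X) (w : Word α) :
    ContinuousOn (fun t => sigUpTo X t w) (Icc 0 X.T) := by
  induction w using List.reverseRecOn with
  | nil => exact continuousOn_const
  | append_singleton w i ih =>
    have h := intervalIntegral.continuousOn_primitive_interval'
      (hX.intervalIntegrable_mul_deriv ih i ⟨hX.1.le, le_rfl⟩) left_mem_uIcc
    rw [uIcc_of_le hX.1.le] at h
    exact h.congr fun t _ => sigUpTo_append_singleton X t w i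

theorem hasDerivWithinAt_sigUpTo_append_singleton (hX : IsPath X) (w : Word α) (i : α)
    (hx : x ∈ Ico 0 X.T) :
    HasDerivWithinAt (fun t => sigUpTo X t (w ++ [i])) (sigUpTo X x w * rightDeriv X i x)
      (Ici x) x := by
  have hIcc : Icc 0 X.T ∈ 𝓝[>] x :=
    mem_of_superset (Ioo_mem_nhdsGT hx.2) fun s hs => ⟨hx.1.trans hs.1.le, hs.2.le⟩
  have hw := hX.continuousOn_sigUpTo w
  have hmeas : StronglyMeasurableAtFilter
      (fun s => sigUpTo X s w * deriv (fun u => X.toFun u i) s) (𝓝[>] x) volume :=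
    ⟨_, hIcc, (hw.aestronglyMeasurable measurableSet_Icc).mul
      (measurable_deriv _).aestronglyMeasurable⟩
  have hlim : Tendsto (fun s => sigUpTo X s w * deriv (fun u => X.toFun u i) s) (𝓝[>] x)
      (𝓝 (sigUpTo X x w * rightDeriv X i x)) :=
    ((hw x (Ico_subset_Icc_self hx)).mono_of_mem_nhdsWithin hIcc).tendsto.mul
      (hX.tendsto_deriv_rightDeriv i hx)
  simp only [sigUpTo_append_singleton]
  exact intervalIntegral.integral_hasDerivWithinAt_of_tendsto_ae_right
    (hX.intervalIntegrable_mul_deriv hw i (Ico_subset_Icc_self hx)) hmeas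
    (hlim.mono_left inf_le_left)

theorem sigUpTo_singleton (hX : IsPath X) (i : α) (ht : t ∈ Icc 0 X.T) :
    sigUpTo X t [i] = X.toFun t i - X.toFun 0 i := by
  refine eq_of_has_deriv_right_eq (f' := rightDeriv X i) (g := fun t => X.toFun t i - X.toFun 0 i)
    (fun x hx => ?_) (fun x hx => ?_)
    (hX.continuousOn_sigUpTo [i]) ((hX.2.1 i).sub continuousOn_const) ?_ t ht
  · simpa [sigUpTo_nil] using hX.hasDerivWithinAt_sigUpTo_append_singleton [] i hx
  · exact (hX.hasDerivWithinAt_rightDeriv i hx).sub_const (X.toFun 0 i)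
  · simp [sigUpTo_zero_of_ne_nil]

theorem sum_shuffles_sigUpTo (hX : IsPath X) (u v : Word α) (ht : t ∈ Icc 0 X.T) :
    ((shuffles u v).map (sigUpTo X t)).sum = sigUpTo X t u * sigUpTo X t v := by
  induction hn : u.length + v.length using Nat.strong_induction_on generalizing u v t with
  | _ n ih =>
    rcases List.eq_nil_or_concat u with rfl | ⟨p, a, rfl⟩
    · simp [sigUpTo_nil]
    rcases List.eq_nil_or_concat v with rfl | ⟨q, b, rfl⟩
    · simp [sigUpTo_nil]
    simp only [List.concat_eq_append, List.length_append, List.length_singleton] at hn ⊢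
    rw [((perm_shuffles_append_singleton p q a b).map _).sum_eq, List.map_append, List.sum_append,
      List.map_map, List.map_map]
    refine eq_of_has_deriv_right_eq
      (f := fun t => ((shuffles p (q ++ [b])).map fun w => sigUpTo X t (w ++ [a])).sum +
        ((shuffles (p ++ [a]) q).map fun w => sigUpTo X t (w ++ [b])).sum)
      (g := fun t => sigUpTo X t (p ++ [a]) * sigUpTo X t (q ++ [b]))
      (f' := fun x => sigUpTo X x p * sigUpTo X x (q ++ [b]) * rightDeriv X a x +
          sigUpTo X x (p ++ [a]) * sigUpTo X x q * rightDeriv X b x)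
      (fun x hx => ?_) (fun x hx => ?_) ?_ ?_ ?_ t ht
    · have hx' := Ico_subset_Icc_self hx
      rw [← ih (p.length + (q.length + 1)) (by omega) p (q ++ [b]) hx' (by simp),
        ← ih (p.length + 1 + q.length) (by omega) (p ++ [a]) q hx' (by simp),
        ← List.sum_map_mul_right, ← List.sum_map_mul_right]
      exact (HasDerivWithinAt.list_sum _ fun w _ =>
        hX.hasDerivWithinAt_sigUpTo_append_singleton w a hx).add
          (.list_sum _ fun w _ => hX.hasDerivWithinAt_sigUpTo_append_singleton w b hx)
    · exact ((hX.hasDerivWithinAt_sigUpTo_append_singleton p a hx).fun_mul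
        (hX.hasDerivWithinAt_sigUpTo_append_singleton q b hx)).congr_deriv (by ring)
    · exact (continuousOn_list_sum _ fun w _ => hX.continuousOn_sigUpTo _).add
        (continuousOn_list_sum _ fun w _ => hX.continuousOn_sigUpTo _)
    · exact (hX.continuousOn_sigUpTo _).mul (hX.continuousOn_sigUpTo _)
    · simp [sigUpTo_zero_append_singleton]

end IsPath

/-- `⟨σ(X)_t, ·⟩`; in particular `pair X = pairAt X X.T`. -/
noncomputable def pairAt (X : RawPath α) (t : ℝ) : TA α →ₗ[ℝ] ℝ :=
  Finsupp.linearCombination ℝ (sigUpTo X t)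

theorem pairAt_apply (X : RawPath α) (t : ℝ) (z : TA α) :
    pairAt X t z = z.sum fun w c => c * sigUpTo X t w := by
  simp [pairAt, Finsupp.linearCombination_apply]

theorem pairAt_single (X : RawPath α) (t : ℝ) (w : Word α) (c : ℝ) :
    pairAt X t (Finsupp.single w c) = c * sigUpTo X t w := by
  simp [pairAt]

theorem pairAt_zero (X : RawPath α) (z : TA α) : pairAt X 0 z = z [] := by
  rw [pairAt_apply, Finsupp.sum_eq_single [] (fun w _ hw => by rw [sigUpTo_zero_of_ne_nil X hw,
    mul_zero]) (fun _ => zero_mul _), sigUpTo_nil, mul_one]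

theorem map_finsupp_sum_sum_smul (L : TA α →ₗ[ℝ] ℝ) (F : Word α → Word α → TA α) (x y : TA α) :
    L (x.sum fun u cu => y.sum fun v cv => (cu * cv) • F u v) =
      x.sum fun u cu => y.sum fun v cv => cu * cv * L (F u v) := by
  simp [map_finsuppSum]

theorem pairAt_shw (X : RawPath α) (t : ℝ) (u v : Word α) :
    pairAt X t (shw u v) = ((shuffles u v).map (sigUpTo X t)).sum := by
  simp [shw, map_list_sum, Function.comp_def, pairAt_single]

theorem pairAt_rshw_append_singleton (X : RawPath α) (t : ℝ) (u q : Word α) (b : α) :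
    pairAt X t (rshw u (q ++ [b])) = ((shuffles u q).map fun w => sigUpTo X t (w ++ [b])).sum := by
  simp [rshw, map_list_sum, Function.comp_def, pairAt_single]

theorem pairAt_zero_rsh (X : RawPath α) (z : TA α) {y : TA α} (hy : y [] = 0) :
    pairAt X 0 (rsh z y) = 0 := by
  rw [rsh, map_finsupp_sum_sum_smul]
  refine Finset.sum_eq_zero fun u _ => Finset.sum_eq_zero fun v hv => ?_
  obtain ⟨q, b, rfl⟩ := (List.eq_nil_or_concat v).resolve_left
    fun h => Finsupp.mem_support_iff.1 hv (h ▸ hy)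
  simp [pairAt_rshw_append_singleton, sigUpTo_zero_append_singleton]

namespace IsPath

theorem continuousOn_pairAt (hX : IsPath X) (z : TA α) :
    ContinuousOn (fun t => pairAt X t z) (Icc 0 X.T) := by
  simp only [pairAt_apply, Finsupp.sum]
  exact continuousOn_finsetSum _ fun w _ => continuousOn_const.mul (hX.continuousOn_sigUpTo w)

theorem pairAt_sh (hX : IsPath X) (x y : TA α) (ht : t ∈ Icc 0 X.T) :
    pairAt X t (sh x y) = pairAt X t x * pairAt X t y := by
  rw [sh, map_finsupp_sum_sum_smul, pairAt_apply, pairAt_apply, Finsupp.sum_mul]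
  refine Finsupp.sum_congr fun u _ => ?_
  rw [Finsupp.mul_sum]
  refine Finsupp.sum_congr fun v _ => ?_
  rw [pairAt_shw, hX.sum_shuffles_sigUpTo u v ht]
  ring

theorem hasDerivWithinAt_sigUpTo (hX : IsPath X) {v : Word α} (hv : v ≠ []) (hx : x ∈ Ico 0 X.T) :
    HasDerivWithinAt (fun t => sigUpTo X t v) (derivWithin (fun t => sigUpTo X t v) (Ici x) x)
      (Ici x) x := by
  obtain ⟨q, b, rfl⟩ := (List.eq_nil_or_concat v).resolve_left hv
  rw [List.concat_eq_append]
  exact (hX.hasDerivWithinAt_sigUpTo_append_singleton q b hx).differentiableWithinAt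
    |>.hasDerivWithinAt

theorem hasDerivWithinAt_pairAt_rshw (hX : IsPath X) (u : Word α) {v : Word α} (hv : v ≠ [])
    (hx : x ∈ Ico 0 X.T) :
    HasDerivWithinAt (fun t => pairAt X t (rshw u v))
      (sigUpTo X x u * derivWithin (fun t => sigUpTo X t v) (Ici x) x) (Ici x) x := by
  obtain ⟨q, b, rfl⟩ := (List.eq_nil_or_concat v).resolve_left hv
  simp only [List.concat_eq_append, pairAt_rshw_append_singleton]
  rw [(hX.hasDerivWithinAt_sigUpTo_append_singleton q b hx).derivWithin (uniqueDiffWithinAt_Ici x),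
    ← mul_assoc, ← hX.sum_shuffles_sigUpTo u q (Ico_subset_Icc_self hx), ← List.sum_map_mul_right]
  exact .list_sum _ fun w _ => hX.hasDerivWithinAt_sigUpTo_append_singleton w b hx

theorem hasDerivWithinAt_pairAt_rsh (hX : IsPath X) (z : TA α) {y : TA α} (hy : y [] = 0)
    (hx : x ∈ Ico 0 X.T) :
    HasDerivWithinAt (fun t => pairAt X t (rsh z y))
      (pairAt X x z * derivWithin (fun t => pairAt X t y) (Ici x) x) (Ici x) x := by
  have hne : ∀ v ∈ y.support, v ≠ [] := fun v hv h => Finsupp.mem_support_iff.1 hv (h ▸ hy)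
  have hy' : HasDerivWithinAt (fun t => pairAt X t y)
      (y.sum fun v c => c * derivWithin (fun t => sigUpTo X t v) (Ici x) x) (Ici x) x := by
    simp only [pairAt_apply, Finsupp.sum]
    exact .fun_sum fun v hv => (hX.hasDerivWithinAt_sigUpTo (hne v hv) hx).const_mul _
  rw [hy'.derivWithin (uniqueDiffWithinAt_Ici x), pairAt_apply, Finsupp.sum_mul]
  simp only [rsh, map_finsupp_sum_sum_smul, Finsupp.mul_sum]
  refine .fun_sum fun u _ => .fun_sum fun v hv => ?_
  exact ((hX.hasDerivWithinAt_pairAt_rshw u (hne v hv) hx).const_mul _).congr_deriv (by ring)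

theorem pairAt_rsh_eqOn_zero_of_left (hX : IsPath X) {z y : TA α}
    (hz : EqOn (fun t => pairAt X t z) 0 (Icc 0 X.T)) (hy : y [] = 0) :
    EqOn (fun t => pairAt X t (rsh z y)) 0 (Icc 0 X.T) :=
  eq_of_has_deriv_right_eq (f' := 0)
    (fun x hx => by
      simpa [hz (Ico_subset_Icc_self hx)] using hX.hasDerivWithinAt_pairAt_rsh z hy hx)
    (fun x _ => hasDerivWithinAt_const x _ 0) (hX.continuousOn_pairAt _) continuousOn_const
    (pairAt_zero_rsh X z hy)

theorem pairAt_rsh_eqOn_zero_of_right (hX : IsPath X) (y : TA α) {z : TA α}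
    (hz : EqOn (fun t => pairAt X t z) 0 (Icc 0 X.T)) :
    EqOn (fun t => pairAt X t (rsh y z)) 0 (Icc 0 X.T) := by
  have hz0 : z [] = 0 := by rw [← pairAt_zero]; exact hz ⟨le_rfl, hX.1.le⟩
  exact eq_of_has_deriv_right_eq (f' := 0)
    (fun x hx => by
      simpa [derivWithin_Ici_eq_zero_of_eqOn_zero hz hx] using
        hX.hasDerivWithinAt_pairAt_rsh y hz0 hx)
    (fun x _ => hasDerivWithinAt_const x _ 0) (hX.continuousOn_pairAt _) continuousOn_const
    (pairAt_zero_rsh X y hz0)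

theorem pairAt_eq_eval (hX : IsPath X) (hX0 : ∀ i, X.toFun 0 i = 0)
    {Φ : MvPolynomial α ℝ → TA α} (hΦadd : ∀ q r, Φ (q + r) = Φ q + Φ r)
    (hΦmul : ∀ q r, Φ (q * r) = sh (Φ q) (Φ r))
    (hΦC : ∀ c : ℝ, Φ (MvPolynomial.C c) = Finsupp.single [] c)
    (hΦX : ∀ j, Φ (MvPolynomial.X j) = Finsupp.single [j] 1) (q : MvPolynomial α ℝ)
    (ht : t ∈ Icc 0 X.T) : pairAt X t (Φ q) = MvPolynomial.eval (X.toFun t) q := by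
  induction q using MvPolynomial.induction_on with
  | C c => rw [hΦC, pairAt_single, sigUpTo_nil, mul_one, MvPolynomial.eval_C]
  | add q r hq hr => rw [hΦadd, map_add, hq, hr, map_add]
  | mul_X q i hq =>
    rw [hΦmul, hX.pairAt_sh _ _ ht, hq, hΦX, pairAt_single, one_mul, hX.sigUpTo_singleton i ht,
      hX0 i, sub_zero, map_mul, MvPolynomial.eval_X]

end IsPath

theorem statement9_general {d m : ℕ} (p : Fin m → MvPolynomial (Fin d) ℝ)
    (Φ : MvPolynomial (Fin d) ℝ → TA (Fin d))
    (hΦadd : ∀ q r, Φ (q + r) = Φ q + Φ r)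
    (hΦmul : ∀ q r, Φ (q * r) = sh (Φ q) (Φ r))
    (hΦC : ∀ c : ℝ, Φ (MvPolynomial.C c) = Finsupp.single [] c)
    (hΦX : ∀ j : Fin d, Φ (MvPolynomial.X j) = Finsupp.single [j] 1)
    (X : RawPath (Fin d)) (hX : IsPath X)
    (hX0 : ∀ i, X.toFun 0 i = 0)
    (hXzero : ∀ t ∈ Set.Icc (0 : ℝ) X.T, ∀ j,
      MvPolynomial.eval (fun i => X.toFun t i) (p j) = 0) :
    ∀ x ∈ sInf {J : Submodule ℝ (TA (Fin d)) |
        (∀ z ∈ J, z [] = 0) ∧ (∀ j, Φ (p j) ∈ J) ∧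
        ∀ z ∈ J, ∀ y : TA (Fin d), y [] = 0 → rsh z y ∈ J ∧ rsh y z ∈ J},
      pair X x = 0 := by
  let J : Submodule ℝ (TA (Fin d)) := ⨅ t ∈ Icc 0 X.T, LinearMap.ker (pairAt X t)
  have hJ {z} : z ∈ J ↔ EqOn (fun t => pairAt X t z) 0 (Icc 0 X.T) := by
    simp [J, Submodule.mem_iInf, EqOn]
  intro x hx
  refine hJ.1 ((sInf_le (a := J) ?_) hx) ⟨hX.1.le, le_rfl⟩
  refine ⟨fun z hz => ?_, fun j => hJ.2 fun t ht => ?_, fun z hz y hy => ⟨?_, ?_⟩⟩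
  · rw [← pairAt_zero]
    exact hJ.1 hz ⟨le_rfl, hX.1.le⟩
  · exact (hX.pairAt_eq_eval hX0 hΦadd hΦmul hΦC hΦX _ ht).trans (hXzero t ht j)
  · exact hJ.2 (hX.pairAt_rsh_eqOn_zero_of_left (hJ.1 hz) hy)
  · exact hJ.2 (hX.pairAt_rsh_eqOn_zero_of_right y (hJ.1 hz))

/-- If `p : ℝ^d → ℝ^m` is a polynomial map with `p(0) = 0` and `X` is a
path starting at `0` staying in the zero locus of `p`, then `⟨σ(X), x⟩ = 0` for every
`x` in the `≻`-ideal generated by `φ(p₁),…,φ(pₘ)` (the smallest subspace of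
`T^{≥1}(ℝ^d)` containing the `φ(pⱼ)` and stable under `≻` on both sides). -/
theorem statement9 {d m : ℕ} (p : Fin m → MvPolynomial (Fin d) ℝ)
    (hp0 : ∀ j, MvPolynomial.eval (fun _ => (0 : ℝ)) (p j) = 0)
    (Φ : MvPolynomial (Fin d) ℝ → TA (Fin d))
    (hΦadd : ∀ q r, Φ (q + r) = Φ q + Φ r)
    (hΦmul : ∀ q r, Φ (q * r) = sh (Φ q) (Φ r))
    (hΦC : ∀ c : ℝ, Φ (MvPolynomial.C c) = Finsupp.single [] c)
    (hΦX : ∀ j : Fin d, Φ (MvPolynomial.X j) = Finsupp.single [j] 1)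
    (X : RawPath (Fin d)) (hX : IsPath X)
    (hX0 : ∀ i, X.toFun 0 i = 0)
    (hXzero : ∀ t ∈ Set.Icc (0 : ℝ) X.T, ∀ j,
      MvPolynomial.eval (fun i => X.toFun t i) (p j) = 0) :
    ∀ x ∈ sInf {J : Submodule ℝ (TA (Fin d)) |
        (∀ z ∈ J, z [] = 0) ∧ (∀ j, Φ (p j) ∈ J) ∧
        ∀ z ∈ J, ∀ y : TA (Fin d), y [] = 0 → rsh z y ∈ J ∧ rsh y z ∈ J},
      pair X x = 0 :=
  statement9_general p Φ hΦadd hΦmul hΦC hΦX X hX hX0 hXzero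

end PathVarieties
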